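/- Let ζ ∈ (0, ζ₀). For all l, m ∈ ℕ with l ≠ m, the sets 𝒵_l and 𝒵_m are disjoint: 𝒵_l ∩ 𝒵_m = ∅. -/

import Mathlib

/-- The pair `(P_n, Q_n)` of polynomials defined by `P_0 = Q_0 = 1`,
`P_{n+1} = (ζ Q_n + X P_n)²`, `Q_{n+1} = (Q_n + ζ X P_n)²`. -/
noncomputable def PQ (ζ : ℝ) : ℕ → Polynomial ℂ × Polynomial ℂ
  | 0 => (1, 1)
  | n + 1 =>
    (((ζ : ℂ) • (PQ ζ n).2 + Polynomial.X * (PQ ζ n).1) ^ 2,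
     ((PQ ζ n).2 + (ζ : ℂ) • (Polynomial.X * (PQ ζ n).1)) ^ 2)

noncomputable def Ppoly (ζ : ℝ) (n : ℕ) : Polynomial ℂ := (PQ ζ n).1

noncomputable def Qpoly (ζ : ℝ) (n : ℕ) : Polynomial ℂ := (PQ ζ n).2

/-- `R_n = ζ·X·P_n + Q_n`. -/
noncomputable def Rpoly (ζ : ℝ) (n : ℕ) : Polynomial ℂ :=
  (ζ : ℂ) • (Polynomial.X * Ppoly ζ n) + Qpoly ζ n

/-- `𝒵_n`, the set of complex roots of `R_n`. -/
def Zset (ζ : ℝ) (n : ℕ) : Set ℂ := {z : ℂ | (Rpoly ζ n).eval z = 0}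

/-- `𝒵 = ⋃ₙ 𝒵_n`. -/
def ZsetAll (ζ : ℝ) : Set ℂ := ⋃ n : ℕ, Zset ζ n

/-!
Write `q_k = Q_k(z)` and `b_k = z P_k(z)`, so that `q_{k+1} = (q_k + ζ b_k)²`,
`b_{k+1} = z (ζ q_k + b_k)²` and `R_k(z) = q_k + ζ b_k`; in particular `Q_{k+1} = R_k²`.
On the closed unit disk `|b_k| ≤ |q_k| ≠ 0` for every `k`, so all roots satisfy `|z| > 1`.
If `R_l(z) = 0`, then `q_{l+1} = 0 ≠ b_{l+1}`. For `ζ < ζ₀`, i.e. `ζ³ + ζ² + 3ζ < 1`, the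
inequality `|q + ζ b|² ≤ ζ |ζ q + b|²` whenever `|q| ≤ ζ |b|`, combined with `|z| > 1`, propagates
`|q_j| < ζ |b_j|` to every `j > l`, whereas `R_j(z) = 0` would force `|q_j| = ζ |b_j|`.
-/

section InnerProductSpace

variable {E : Type*} [NormedAddCommGroup E] [InnerProductSpace ℝ E]

theorem norm_smul_add_le_norm_add_smul {t : ℝ} (ht₀ : 0 ≤ t) (ht₁ : t ≤ 1) {x y : E}
    (h : ‖y‖ ≤ ‖x‖) : ‖t • x + y‖ ≤ ‖x + t • y‖ := by
  refine (sq_le_sq₀ (norm_nonneg _) (norm_nonneg _)).1 ?_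
  -- both sides share the cross term `2t⟪x, y⟫`; they differ by `(1 - t²)(‖x‖² - ‖y‖²)`
  rw [norm_add_sq_real, norm_add_sq_real, norm_smul, norm_smul, real_inner_smul_left,
    real_inner_smul_right, Real.norm_of_nonneg ht₀]
  nlinarith [mul_le_mul h h (norm_nonneg y) (norm_nonneg x), mul_le_mul ht₁ ht₁ ht₀ zero_le_one]

theorem norm_add_smul_sq_le {t : ℝ} (ht₀ : 0 ≤ t) (ht : t ^ 3 + t ^ 2 + 3 * t ≤ 1) {x y : E}
    (h : ‖x‖ ≤ t * ‖y‖) : ‖x + t • y‖ ^ 2 ≤ t * ‖t • x + y‖ ^ 2 := by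
  have ht₁ : t ≤ 1 := by nlinarith
  set u := ‖x‖
  set w := ‖y‖
  set p := inner ℝ x y
  -- smallest when `p = u w` and `u = t w`, where it equals `t w² (1 - 3t - t² - t³)`
  have hF : 0 ≤ t * w ^ 2 - 2 * t * p - (1 + t + t ^ 2) * u ^ 2 := by
    nlinarith [mul_nonneg ht₀ (sub_nonneg.2 (real_inner_le_norm x y)),
      mul_nonneg (sub_nonneg.2 h) (by positivity : 0 ≤ 2 * t * w + (1 + t + t ^ 2) * (t * w + u)),
      mul_nonneg (mul_nonneg ht₀ (sq_nonneg w)) (by linarith : 0 ≤ 1 - 3 * t - t ^ 2 - t ^ 3)]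
  have hdiff : t * ‖t • x + y‖ ^ 2 - ‖x + t • y‖ ^ 2
      = (1 - t) * (t * w ^ 2 - 2 * t * p - (1 + t + t ^ 2) * u ^ 2) := by
    rw [norm_add_sq_real, norm_add_sq_real, norm_smul, norm_smul, real_inner_smul_left,
      real_inner_smul_right, Real.norm_of_nonneg ht₀]
    ring
  nlinarith [mul_nonneg (sub_nonneg.2 ht₁) hF]

end InnerProductSpace

theorem cubic_lt_one_of_lt_sq {s ζ : ℝ} (hs : s ^ 3 + s ^ 2 + s - 1 = 0) (hζ₀ : 0 ≤ ζ)
    (hζ : ζ < s ^ 2) : ζ ^ 3 + ζ ^ 2 + 3 * ζ < 1 := by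
  have hs₀ : (s ^ 2) ^ 3 + (s ^ 2) ^ 2 + 3 * s ^ 2 = 1 := by
    linear_combination (s ^ 3 - s ^ 2 + s + 1) * hs
  nlinarith [mul_pos (sub_pos.2 hζ)
    (by positivity : (0 : ℝ) < s ^ 4 + s ^ 2 * ζ + ζ ^ 2 + s ^ 2 + ζ + 3)]

theorem norm_eq_of_add_eq_zero {E : Type*} [SeminormedAddCommGroup E] {x y : E} (h : x + y = 0) :
    ‖x‖ = ‖y‖ := by
  rw [eq_neg_of_add_eq_zero_left h, norm_neg]

theorem norm_smul_lt_of_norm_le {E : Type*} [NormedAddCommGroup E] [NormedSpace ℝ E] {t : ℝ}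
    (ht₀ : 0 ≤ t) (ht₁ : t < 1) {x y : E} (h : ‖y‖ ≤ ‖x‖) (hx : x ≠ 0) : ‖t • y‖ < ‖x‖ := by
  rw [norm_smul, Real.norm_of_nonneg ht₀]
  nlinarith [norm_pos_iff.2 hx, norm_nonneg y]

theorem norm_add_smul_sq_lt {ζ : ℝ} (hζ₀ : 0 < ζ) (hζ : ζ ^ 3 + ζ ^ 2 + 3 * ζ ≤ 1) {z q b : ℂ}
    (hz : 1 < ‖z‖) (h : ‖q‖ < ζ * ‖b‖) : ‖(q + ζ • b) ^ 2‖ < ζ * ‖z * (ζ • q + b) ^ 2‖ := by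
  have hζ₁ : ζ < 1 := by nlinarith
  have hqb : ‖ζ • q‖ < ‖b‖ := by
    rw [norm_smul, Real.norm_of_nonneg hζ₀.le]
    nlinarith [norm_nonneg b]
  have hne : ζ • q + b ≠ 0 := fun h => hqb.ne (norm_eq_of_add_eq_zero h)
  rw [norm_pow, norm_mul, norm_pow]
  calc ‖q + ζ • b‖ ^ 2 ≤ ζ * ‖ζ • q + b‖ ^ 2 := norm_add_smul_sq_le hζ₀.le hζ h.le
    _ < ζ * (‖z‖ * ‖ζ • q + b‖ ^ 2) := by
      gcongr
      exact lt_mul_left (pow_pos (norm_pos_iff.2 hne) 2) hz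

section Recursion

variable (ζ : ℝ) (z : ℂ) (k : ℕ)

theorem Qpoly_succ : Qpoly ζ (k + 1) = Rpoly ζ k ^ 2 := by
  simp only [Qpoly, PQ, Rpoly, Ppoly, add_comm]

theorem eval_Rpoly :
    (Rpoly ζ k).eval z = (Qpoly ζ k).eval z + ζ • (z * (Ppoly ζ k).eval z) := by
  simp [Rpoly, add_comm, Complex.coe_smul]

theorem eval_Qpoly_succ :
    (Qpoly ζ (k + 1)).eval z = ((Qpoly ζ k).eval z + ζ • (z * (Ppoly ζ k).eval z)) ^ 2 := by
  rw [Qpoly_succ, Polynomial.eval_pow, eval_Rpoly]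

theorem eval_Ppoly_succ :
    (Ppoly ζ (k + 1)).eval z = (ζ • (Qpoly ζ k).eval z + z * (Ppoly ζ k).eval z) ^ 2 := by
  simp [Ppoly, Qpoly, PQ, Complex.coe_smul]

end Recursion

section Roots

variable {ζ : ℝ} {z : ℂ}

theorem norm_mul_eval_Ppoly_le_norm_eval_Qpoly (hζ₀ : 0 ≤ ζ) (hζ₁ : ζ < 1) (hz : ‖z‖ ≤ 1)
    (k : ℕ) : ‖z * (Ppoly ζ k).eval z‖ ≤ ‖(Qpoly ζ k).eval z‖ ∧ (Qpoly ζ k).eval z ≠ 0 := by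
  induction k with
  | zero => simpa [Ppoly, Qpoly, PQ] using hz
  | succ k ih =>
    obtain ⟨hbq, hq⟩ := ih
    have hlt := norm_smul_lt_of_norm_le hζ₀ hζ₁ hbq hq
    rw [eval_Ppoly_succ, eval_Qpoly_succ]
    refine ⟨?_, pow_ne_zero 2 fun h => hlt.ne' (norm_eq_of_add_eq_zero h)⟩
    rw [norm_mul, norm_pow, norm_pow]
    calc ‖z‖ * ‖ζ • (Qpoly ζ k).eval z + z * (Ppoly ζ k).eval z‖ ^ 2
        ≤ 1 * ‖ζ • (Qpoly ζ k).eval z + z * (Ppoly ζ k).eval z‖ ^ 2 := by gcongr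
      _ ≤ ‖(Qpoly ζ k).eval z + ζ • (z * (Ppoly ζ k).eval z)‖ ^ 2 := by
        rw [one_mul]
        gcongr
        exact norm_smul_add_le_norm_add_smul hζ₀ hζ₁.le hbq

theorem one_lt_norm_of_mem_Zset (hζ₀ : 0 ≤ ζ) (hζ₁ : ζ < 1) {k : ℕ} (hz : z ∈ Zset ζ k) :
    1 < ‖z‖ := by
  by_contra! hz₁
  obtain ⟨hbq, hq⟩ := norm_mul_eval_Ppoly_le_norm_eval_Qpoly hζ₀ hζ₁ hz₁ k
  have hR : (Rpoly ζ k).eval z = 0 := hz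
  rw [eval_Rpoly] at hR
  exact (norm_smul_lt_of_norm_le hζ₀ hζ₁ hbq hq).ne' (norm_eq_of_add_eq_zero hR)

theorem eval_Qpoly_ne_zero_of_eval_Ppoly_eq_zero (hζ : ζ ^ 2 ≠ 1) (hz : z ≠ 0) (k : ℕ)
    (hP : (Ppoly ζ k).eval z = 0) : (Qpoly ζ k).eval z ≠ 0 := by
  induction k with
  | zero => simp [Qpoly, PQ]
  | succ k ih =>
    intro hQ
    rw [eval_Ppoly_succ, pow_eq_zero_iff two_ne_zero, Complex.real_smul] at hP
    rw [eval_Qpoly_succ, pow_eq_zero_iff two_ne_zero, Complex.real_smul] at hQ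
    have hζC : (1 : ℂ) - (ζ : ℂ) ^ 2 ≠ 0 := by exact_mod_cast sub_ne_zero.2 hζ.symm
    have hq : (Qpoly ζ k).eval z = 0 :=
      (mul_eq_zero.1 (by linear_combination hQ - (ζ : ℂ) * hP)).resolve_left hζC
    rw [hq, mul_zero, zero_add, mul_eq_zero] at hP
    exact ih (hP.resolve_left hz) hq

theorem norm_eval_Qpoly_lt_of_mem_Zset (hζ₀ : 0 < ζ) (hζ : ζ ^ 3 + ζ ^ 2 + 3 * ζ ≤ 1)
    {l : ℕ} (hz : z ∈ Zset ζ l) {j : ℕ} (hj : l < j) :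
    ‖(Qpoly ζ j).eval z‖ < ζ * ‖z * (Ppoly ζ j).eval z‖ := by
  have hζ₁ : ζ < 1 := by nlinarith
  have hz₁ := one_lt_norm_of_mem_Zset hζ₀.le hζ₁ hz
  have hz₀ : z ≠ 0 := by
    rintro rfl
    norm_num at hz₁
  induction j, hj using Nat.le_induction with
  | base =>
    have hR : (Rpoly ζ l).eval z = 0 := hz
    have hP : (Ppoly ζ l).eval z ≠ 0 := fun hP =>
      eval_Qpoly_ne_zero_of_eval_Ppoly_eq_zero (by nlinarith) hz₀ l hP
        (by simpa [eval_Rpoly, hP] using hR)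
    rw [eval_Rpoly] at hR
    -- `Q_{l+1}(z) = R_l(z)^2 = 0`, while `z P_{l+1}(z) = z ((1 - ζ²) z P_l(z))²`
    rw [eval_Qpoly_succ, hR, eval_Ppoly_succ, eq_neg_of_add_eq_zero_left hR,
      show ∀ b : ℂ, ζ • -(ζ • b) + b = (1 - ζ ^ 2) • b from fun b => by module]
    have hζsq : 1 - ζ ^ 2 ≠ 0 := by nlinarith
    rw [zero_pow two_ne_zero, norm_zero]
    exact mul_pos hζ₀ (norm_pos_iff.2 (mul_ne_zero hz₀ (pow_ne_zero 2
      (smul_ne_zero hζsq (mul_ne_zero hz₀ hP)))))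
  | succ j hj ih =>
    rw [eval_Qpoly_succ, eval_Ppoly_succ]
    exact norm_add_smul_sq_lt hζ₀ hζ hz₁ ih

theorem notMem_Zset_of_norm_eval_Qpoly_lt (hζ₀ : 0 ≤ ζ) {k : ℕ}
    (h : ‖(Qpoly ζ k).eval z‖ < ζ * ‖z * (Ppoly ζ k).eval z‖) : z ∉ Zset ζ k := by
  intro hz
  have hR : (Rpoly ζ k).eval z = 0 := hz
  rw [eval_Rpoly] at hR
  rw [norm_eq_of_add_eq_zero hR, norm_smul, Real.norm_of_nonneg hζ₀] at h
  exact h.false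

theorem Zset_disjoint_of_lt (hζ₀ : 0 < ζ) (hζ : ζ ^ 3 + ζ ^ 2 + 3 * ζ ≤ 1) {l m : ℕ}
    (hlm : l < m) : Disjoint (Zset ζ l) (Zset ζ m) :=
  Set.disjoint_left.2 fun _ hl =>
    notMem_Zset_of_norm_eval_Qpoly_lt hζ₀.le (norm_eval_Qpoly_lt_of_mem_Zset hζ₀ hζ hl hlm)

end Roots

theorem stmt14_general (s₀ : ℝ)
    (hs₀ : s₀ ^ 3 + s₀ ^ 2 + s₀ - 1 = 0)
    (ζ : ℝ) (hζ0 : 0 < ζ) (hζ : ζ < s₀ ^ 2)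
    (l m : ℕ) (hlm : l ≠ m) :
    Zset ζ l ∩ Zset ζ m = ∅ := by
  have hcubic := (cubic_lt_one_of_lt_sq hs₀ hζ0.le hζ).le
  rw [← Set.disjoint_iff_inter_eq_empty]
  rcases hlm.lt_or_gt with h | h
  · exact Zset_disjoint_of_lt hζ0 hcubic h
  · exact (Zset_disjoint_of_lt hζ0 hcubic h).symm

/-- For `ζ ∈ (0, ζ₀)` (with `ζ₀ = s₀²`, `s₀` the real root of `s³ + s² + s − 1 = 0` in
`(0,1)`), the root sets `𝒵_l` and `𝒵_m` are disjoint whenever `l ≠ m`. -/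
theorem stmt14 (s₀ : ℝ) (hs₀0 : 0 < s₀) (hs₀1 : s₀ < 1)
    (hs₀ : s₀ ^ 3 + s₀ ^ 2 + s₀ - 1 = 0)
    (ζ : ℝ) (hζ0 : 0 < ζ) (hζ : ζ < s₀ ^ 2)
    (l m : ℕ) (hlm : l ≠ m) :
    Zset ζ l ∩ Zset ζ m = ∅ :=
  stmt14_general s₀ hs₀ ζ hζ0 hζ l m hlm
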